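/- Let K ∈ ℝ, N ∈ (1,∞), D > 0 (with D ≤ π√((N−1)/K) if K > 0). Then the function f_{K,N,D} is strictly increasing on the interval (0, D/2). -/

import Mathlib

open MeasureTheory Filter

noncomputable section

/-- The comparison function `s_κ(θ)`:
`sin(√κ·θ)/√κ` if `κ > 0`, `θ` if `κ = 0`, `sinh(√(−κ)·θ)/√(−κ)` if `κ < 0`. -/
def sK (κ θ : ℝ) : ℝ :=
  if 0 < κ then Real.sin (Real.sqrt κ * θ) / Real.sqrt κ
  else if κ = 0 then θ
  else Real.sinh (Real.sqrt (-κ) * θ) / Real.sqrt (-κ)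

/-- `h` is an `MCP(K,N)`-density on the interval `I ⊆ ℝ`: it is a nonnegative Borel
function satisfying
`h(t·x₁+(1−t)·x₀) ≥ (s_{K/(N−1)}((1−t)|x₁−x₀|)/s_{K/(N−1)}(|x₁−x₀|))^{N−1}·h(x₀)`
for all `x₀, x₁ ∈ I`, `t ∈ [0,1]`; when `x₀ = x₁` the coefficient is interpreted as `1−t`,
and when `K > 0` and `|x₁−x₀| ≥ π√((N−1)/K)` the coefficient is `+∞`, forcing `h x₀ = 0`. -/
def IsMCPDensity (K N : ℝ) (I : Set ℝ) (h : ℝ → ℝ) : Prop :=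
  Measurable h ∧ (∀ x ∈ I, 0 ≤ h x) ∧
  ∀ x₀ ∈ I, ∀ x₁ ∈ I, ∀ t ∈ Set.Icc (0:ℝ) 1,
    (x₀ = x₁ → (1 - t) * h x₀ ≤ h x₀) ∧
    (x₀ ≠ x₁ →
      ((0 < K ∧ Real.pi * Real.sqrt ((N - 1) / K) ≤ |x₁ - x₀|) → h x₀ = 0) ∧
      (¬(0 < K ∧ Real.pi * Real.sqrt ((N - 1) / K) ≤ |x₁ - x₀|) →
        (sK (K / (N - 1)) ((1 - t) * |x₁ - x₀|) / sK (K / (N - 1)) |x₁ - x₀|) ^ (N - 1) * h x₀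
          ≤ h (t * x₁ + (1 - t) * x₀)))

/-- `h` is a `CD(K,N)`-density on the interval `I ⊆ ℝ`. -/
def IsCDDensity (K N : ℝ) (I : Set ℝ) (h : ℝ → ℝ) : Prop :=
  (∀ x ∈ I, 0 ≤ h x) ∧
  ∀ x₀ ∈ I, ∀ x₁ ∈ I, x₀ < x₁ → ∀ t ∈ Set.Icc (0:ℝ) 1,
    (sK (K / (N - 1)) ((1 - t) * (x₁ - x₀)) / sK (K / (N - 1)) (x₁ - x₀)) * h x₀ ^ (1 / (N - 1))
      + (sK (K / (N - 1)) (t * (x₁ - x₀)) / sK (K / (N - 1)) (x₁ - x₀)) * h x₁ ^ (1 / (N - 1))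
      ≤ h ((1 - t) * x₀ + t * x₁) ^ (1 / (N - 1))

/-- The lower-bound function `f_{K,N,D}`. -/
def fKND (K N D : ℝ) (x : ℝ) : ℝ :=
  if x = 0 ∨ x = D then 0
  else ((∫ y in (0:ℝ)..x, (sK (K / (N - 1)) (D - y) / sK (K / (N - 1)) (D - x)) ^ (N - 1)) +
        (∫ y in x..D, (sK (K / (N - 1)) y / sK (K / (N - 1)) x) ^ (N - 1)))⁻¹

/-- The model density `h^a_{K,N,D}`. -/
def hKND (K N D a : ℝ) (x : ℝ) : ℝ :=
  if x ≤ a then fKND K N D a * (sK (K / (N - 1)) (D - x) / sK (K / (N - 1)) (D - a)) ^ (N - 1)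
  else fKND K N D a * (sK (K / (N - 1)) x / sK (K / (N - 1)) a) ^ (N - 1)

/-- `v_{K,N,D}(a) = ∫₀ᵃ h^a_{K,N,D}(x) dx`. -/
def vKND (K N D a : ℝ) : ℝ := ∫ x in (0:ℝ)..a, hKND K N D a x

/-- The (outer) Minkowski content of `A` with respect to `μ`:
`liminf_{ε→0⁺} (μ(Aᵉ) − μ(A))/ε` where `Aᵉ` is the open `ε`-neighbourhood of `A`. -/
def mink (μ : Measure ℝ) (A : Set ℝ) : ℝ :=
  Filter.liminf (fun ε : ℝ => ((μ (Metric.thickening ε A)).toReal - (μ A).toReal) / ε)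
    (nhdsWithin 0 (Set.Ioi 0))

/-- The measure `μ_h = h · Leb` restricted to `[0,D]`. -/
def muh (h : ℝ → ℝ) (D : ℝ) : Measure ℝ :=
  (volume.restrict (Set.Icc (0:ℝ) D)).withDensity (fun x => ENNReal.ofReal (h x))

/-- The restricted one-dimensional isoperimetric profile `Ĩ_{K,N,D}(v)` over
`MCP(K,N)`-densities on `[0,D]` integrating to `1`. -/
def Itilde (K N D v : ℝ) : ℝ :=
  sInf { p : ℝ | ∃ h : ℝ → ℝ, IsMCPDensity K N (Set.Icc 0 D) h ∧
    (∫ x in (0:ℝ)..D, h x) = 1 ∧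
    ∃ A : Set ℝ, MeasurableSet A ∧ A ⊆ Set.Icc 0 D ∧ (muh h D A).toReal = v ∧
      p = mink (muh h D) A }

/-- The restricted one-dimensional isoperimetric profile `Ĩ^{CD}_{K,N,D}(v)` over
`CD(K,N)`-densities on `[0,D]` integrating to `1`. -/
def ItildeCD (K N D v : ℝ) : ℝ :=
  sInf { p : ℝ | ∃ h : ℝ → ℝ, IsCDDensity K N (Set.Icc 0 D) h ∧
    (∫ x in (0:ℝ)..D, h x) = 1 ∧
    ∃ A : Set ℝ, MeasurableSet A ∧ A ⊆ Set.Icc 0 D ∧ (muh h D A).toReal = v ∧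
      p = mink (muh h D) A }


/-! With `S = s_κ^{N-1}`, `G(a) = ∫ₐᴰ S` and `P = G / S`, the substitution `y ↦ D - y` gives
`1 / f_{K,N,D}(x) = P(D - x) + P(x)` for `κ = K/(N-1)`. Since `s_κ'' = -κ s_κ`, one finds
`P' = -1 - (N-1) (c_κ / s_κ^N) G` with `c_κ = s_κ'`, so the derivative of `x ↦ P(D - x) + P(x)` is
`(N-1) ((c_κ/s_κ^N)(D-x) G(D-x) - (c_κ/s_κ^N)(x) G(x))`. For `x < D/2` this is negative:
`c_κ / s_κ^N` is strictly decreasing and positive at `x`, and `0 ≤ G(D-x) < G(x)`. -/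

def cK (κ θ : ℝ) : ℝ :=
  if 0 < κ then Real.cos (Real.sqrt κ * θ)
  else if κ = 0 then 1
  else Real.cosh (Real.sqrt (-κ) * θ)

section Trigonometry

variable {κ θ : ℝ}

lemma sK_of_pos (h : 0 < κ) : sK κ = fun θ => Real.sin (Real.sqrt κ * θ) / Real.sqrt κ := by
  funext θ; simp only [sK, if_pos h]

lemma sK_zero : sK 0 = id := by
  funext θ; simp [sK]

lemma sK_of_neg (h : κ < 0) :
    sK κ = fun θ => Real.sinh (Real.sqrt (-κ) * θ) / Real.sqrt (-κ) := by
  funext θ; simp only [sK, if_neg h.not_gt, if_neg h.ne]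

lemma cK_of_pos (h : 0 < κ) : cK κ = fun θ => Real.cos (Real.sqrt κ * θ) := by
  funext θ; simp only [cK, if_pos h]

lemma cK_zero : cK 0 = fun _ => 1 := by
  funext θ; simp [cK]

lemma cK_of_neg (h : κ < 0) : cK κ = fun θ => Real.cosh (Real.sqrt (-κ) * θ) := by
  funext θ; simp only [cK, if_neg h.not_gt, if_neg h.ne]

lemma continuous_sK (κ : ℝ) : Continuous (sK κ) := by
  rcases lt_trichotomy κ 0 with hκ | rfl | hκ
  · rw [sK_of_neg hκ]; fun_prop
  · rw [sK_zero]; fun_prop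
  · rw [sK_of_pos hκ]; fun_prop

lemma hasDerivAt_sK (κ θ : ℝ) : HasDerivAt (sK κ) (cK κ θ) θ := by
  rcases lt_trichotomy κ 0 with hκ | rfl | hκ
  · have hs : Real.sqrt (-κ) ≠ 0 := (Real.sqrt_pos.mpr (neg_pos.mpr hκ)).ne'
    rw [sK_of_neg hκ, cK_of_neg hκ]
    refine ((((hasDerivAt_id' θ).const_mul (Real.sqrt (-κ))).sinh).div_const
      (Real.sqrt (-κ))).congr_deriv ?_
    field_simp
  · rw [sK_zero, cK_zero]
    exact hasDerivAt_id θ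
  · have hs : Real.sqrt κ ≠ 0 := (Real.sqrt_pos.mpr hκ).ne'
    rw [sK_of_pos hκ, cK_of_pos hκ]
    refine ((((hasDerivAt_id' θ).const_mul (Real.sqrt κ)).sin).div_const
      (Real.sqrt κ)).congr_deriv ?_
    field_simp

lemma hasDerivAt_cK (κ θ : ℝ) : HasDerivAt (cK κ) (-κ * sK κ θ) θ := by
  rcases lt_trichotomy κ 0 with hκ | rfl | hκ
  · have hs : Real.sqrt (-κ) ≠ 0 := (Real.sqrt_pos.mpr (neg_pos.mpr hκ)).ne'
    have hsq : Real.sqrt (-κ) * Real.sqrt (-κ) = -κ := Real.mul_self_sqrt (neg_pos.mpr hκ).le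
    rw [sK_of_neg hκ, cK_of_neg hκ]
    refine (((hasDerivAt_id' θ).const_mul (Real.sqrt (-κ))).cosh).congr_deriv ?_
    field_simp
    linear_combination Real.sinh (Real.sqrt (-κ) * θ) * hsq
  · rw [sK_zero, cK_zero]
    simpa using hasDerivAt_const θ (1 : ℝ)
  · have hs : Real.sqrt κ ≠ 0 := (Real.sqrt_pos.mpr hκ).ne'
    have hsq : Real.sqrt κ * Real.sqrt κ = κ := Real.mul_self_sqrt hκ.le
    rw [sK_of_pos hκ, cK_of_pos hκ]
    refine (((hasDerivAt_id' θ).const_mul (Real.sqrt κ)).cos).congr_deriv ?_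
    field_simp
    linear_combination -Real.sin (Real.sqrt κ * θ) * hsq

lemma cK_sq_add_mul_sK_sq (κ θ : ℝ) : cK κ θ ^ 2 + κ * sK κ θ ^ 2 = 1 := by
  rcases lt_trichotomy κ 0 with hκ | rfl | hκ
  · have hsq : Real.sqrt (-κ) ^ 2 = -κ := Real.sq_sqrt (neg_pos.mpr hκ).le
    rw [sK_of_neg hκ, cK_of_neg hκ, div_pow, hsq, mul_div_assoc', mul_comm κ, mul_div_assoc,
      div_neg, div_self hκ.ne, mul_neg_one, ← sub_eq_add_neg]
    exact Real.cosh_sq_sub_sinh_sq _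
  · simp [sK_zero, cK_zero]
  · have hsq : Real.sqrt κ ^ 2 = κ := Real.sq_sqrt hκ.le
    rw [sK_of_pos hκ, cK_of_pos hκ, div_pow, hsq, mul_div_cancel₀ _ hκ.ne']
    exact Real.cos_sq_add_sin_sq _

lemma sK_pos (hθ : 0 < θ) (hπ : 0 < κ → Real.sqrt κ * θ < Real.pi) : 0 < sK κ θ := by
  rcases lt_trichotomy κ 0 with hκ | rfl | hκ
  · rw [sK_of_neg hκ]
    have hs := Real.sqrt_pos.mpr (neg_pos.mpr hκ)
    exact div_pos (Real.sinh_pos_iff.mpr (mul_pos hs hθ)) hs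
  · rwa [sK_zero]
  · rw [sK_of_pos hκ]
    exact div_pos (Real.sin_pos_of_pos_of_lt_pi (by positivity) (hπ hκ)) (Real.sqrt_pos.mpr hκ)

lemma sK_nonneg (hθ : 0 ≤ θ) (hπ : 0 < κ → Real.sqrt κ * θ ≤ Real.pi) : 0 ≤ sK κ θ := by
  rcases lt_trichotomy κ 0 with hκ | rfl | hκ
  · rw [sK_of_neg hκ]
    exact div_nonneg (Real.sinh_nonneg_iff.mpr (by positivity)) (Real.sqrt_nonneg _)
  · rwa [sK_zero]
  · rw [sK_of_pos hκ]
    exact div_nonneg (Real.sin_nonneg_of_nonneg_of_le_pi (by positivity) (hπ hκ))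
      (Real.sqrt_nonneg _)

lemma cK_pos (hθ : 0 ≤ θ) (hπ : 0 < κ → Real.sqrt κ * θ < Real.pi / 2) : 0 < cK κ θ := by
  rcases lt_trichotomy κ 0 with hκ | rfl | hκ
  · rw [cK_of_neg hκ]
    exact Real.cosh_pos _
  · simp [cK_zero]
  · rw [cK_of_pos hκ]
    refine Real.cos_pos_of_mem_Ioo ⟨?_, hπ hκ⟩
    have : 0 ≤ Real.sqrt κ * θ := by positivity
    linarith [Real.pi_pos]

lemma strictAntiOn_cK_div_sK_rpow {N a b : ℝ} (hN : 1 ≤ N)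
    (hs : ∀ θ ∈ Set.Ioo a b, 0 < sK κ θ) :
    StrictAntiOn (fun θ => cK κ θ / sK κ θ ^ N) (Set.Ioo a b) := by
  have hderiv : ∀ θ ∈ Set.Ioo a b, HasDerivAt (fun θ => cK κ θ / sK κ θ ^ N)
      ((-κ * sK κ θ * sK κ θ ^ N - cK κ θ * (cK κ θ * N * sK κ θ ^ (N - 1))) /
        (sK κ θ ^ N) ^ 2) θ := fun θ hθ =>
    (hasDerivAt_cK κ θ).div ((hasDerivAt_sK κ θ).rpow_const (Or.inl (hs θ hθ).ne'))
      (Real.rpow_pos_of_pos (hs θ hθ) N).ne'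
  refine strictAntiOn_of_deriv_neg (convex_Ioo a b)
    (fun θ hθ => (hderiv θ hθ).continuousAt.continuousWithinAt) fun θ hθ => ?_
  rw [interior_Ioo] at hθ
  rw [(hderiv θ hθ).deriv]
  have hsθ := hs θ hθ
  have hpow : sK κ θ ^ N = sK κ θ ^ (N - 1) * sK κ θ := by
    rw [← Real.rpow_add_one hsθ.ne', sub_add_cancel]
  have hpos : 0 < sK κ θ ^ (N - 1) := Real.rpow_pos_of_pos hsθ _
  -- the numerator is `-s^{N-1} (1 + (N-1) c²)`
  refine div_neg_of_neg_of_pos ?_ (pow_pos (Real.rpow_pos_of_pos hsθ N) 2)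
  rw [hpow]
  nlinarith [cK_sq_add_mul_sK_sq κ θ, mul_nonneg (sub_nonneg.mpr hN) (sq_nonneg (cK κ θ))]

end Trigonometry

section MassRatio

variable {κ N D a b : ℝ}

def tailMass (κ N D a : ℝ) : ℝ := ∫ y in a..D, sK κ y ^ (N - 1)

def massRatio (κ N D a : ℝ) : ℝ := tailMass κ N D a / sK κ a ^ (N - 1)

lemma continuous_sK_rpow (hN : 1 ≤ N) : Continuous fun θ => sK κ θ ^ (N - 1) :=
  (continuous_sK κ).rpow_const fun _ => Or.inr (sub_nonneg.mpr hN)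

@[simp]
lemma tailMass_self : tailMass κ N D D = 0 :=
  intervalIntegral.integral_same

lemma tailMass_lt_tailMass (hN : 1 ≤ N) (hab : a < b) (hs : ∀ θ ∈ Set.Ioo a b, 0 < sK κ θ) :
    tailMass κ N D b < tailMass κ N D a := by
  have hint : ∀ c d, IntervalIntegrable (fun θ => sK κ θ ^ (N - 1)) volume c d :=
    fun c d => (continuous_sK_rpow hN).intervalIntegrable c d
  have hsplit : tailMass κ N D a = (∫ y in a..b, sK κ y ^ (N - 1)) + tailMass κ N D b :=
    (intervalIntegral.integral_add_adjacent_intervals (hint a b) (hint b D)).symm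
  have hpos : 0 < ∫ y in a..b, sK κ y ^ (N - 1) :=
    intervalIntegral.intervalIntegral_pos_of_pos_on (hint a b)
      (fun θ hθ => Real.rpow_pos_of_pos (hs θ hθ) _) hab
  linarith

lemma hasDerivAt_tailMass (hN : 1 ≤ N) (a : ℝ) :
    HasDerivAt (tailMass κ N D) (-(sK κ a ^ (N - 1))) a :=
  intervalIntegral.integral_hasDerivAt_left ((continuous_sK_rpow hN).intervalIntegrable a D)
    ((continuous_sK_rpow hN).stronglyMeasurableAtFilter _ _) (continuous_sK_rpow hN).continuousAt

lemma hasDerivAt_massRatio (hN : 1 ≤ N) (ha : 0 < sK κ a) :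
    HasDerivAt (massRatio κ N D)
      (-1 - (N - 1) * (cK κ a / sK κ a ^ N) * tailMass κ N D a) a := by
  have hS : HasDerivAt (fun θ => sK κ θ ^ (N - 1))
      (cK κ a * (N - 1) * sK κ a ^ (N - 1 - 1)) a :=
    (hasDerivAt_sK κ a).rpow_const (Or.inl ha.ne')
  have hpos : 0 < sK κ a ^ (N - 1) := Real.rpow_pos_of_pos ha _
  refine ((hasDerivAt_tailMass hN a).div hS hpos.ne').congr_deriv ?_
  have hpred : sK κ a ^ (N - 1 - 1) = sK κ a ^ (N - 1) / sK κ a := Real.rpow_sub_one ha.ne' _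
  have hsucc : sK κ a ^ N = sK κ a ^ (N - 1) * sK κ a := by
    rw [← Real.rpow_add_one ha.ne', sub_add_cancel]
  rw [hpred, hsucc]
  field_simp

lemma integral_sK_div_rpow (haD : a ≤ D) (hs : ∀ θ ∈ Set.Icc a D, 0 ≤ sK κ θ) :
    ∫ y in a..D, (sK κ y / sK κ a) ^ (N - 1) = massRatio κ N D a := by
  have hrpow : Set.EqOn (fun y => (sK κ y / sK κ a) ^ (N - 1))
      (fun y => sK κ y ^ (N - 1) / sK κ a ^ (N - 1)) (Set.uIcc a D) := by
    intro y hy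
    rw [Set.uIcc_of_le haD] at hy
    exact Real.div_rpow (hs y hy) (hs a ⟨le_rfl, haD⟩) _
  rw [intervalIntegral.integral_congr hrpow, intervalIntegral.integral_div, massRatio, tailMass]

end MassRatio

lemma sqrt_div_mul_le_pi {K M D : ℝ} (hM : 0 < M) (h : 0 < K → D ≤ Real.pi * Real.sqrt (M / K))
    (hKM : 0 < K / M) : Real.sqrt (K / M) * D ≤ Real.pi := by
  have hK : 0 < K := by simpa [hM] using (div_pos_iff_of_pos_right hM).mp hKM
  have hs : 0 < Real.sqrt (K / M) := Real.sqrt_pos.mpr hKM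
  have := h hK
  rw [← inv_div, Real.sqrt_inv, ← div_eq_mul_inv, le_div_iff₀ hs] at this
  linarith

lemma mem_Ioo_of_mem_Ioo_half {D x : ℝ} (hx : x ∈ Set.Ioo 0 (D / 2)) :
    x ∈ Set.Ioo 0 D ∧ D - x ∈ Set.Ioo 0 D ∧ x < D - x := by
  obtain ⟨h0, h1⟩ := hx
  exact ⟨⟨h0, by linarith⟩, ⟨by linarith, by linarith⟩, by linarith⟩

section DiameterBound

variable {κ N D a θ : ℝ} (hπ : 0 < κ → Real.sqrt κ * D ≤ Real.pi)
include hπ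

lemma sK_pos_of_mem_Ioo (hθ : θ ∈ Set.Ioo 0 D) : 0 < sK κ θ :=
  sK_pos hθ.1 fun hκ => (mul_lt_mul_of_pos_left hθ.2 (Real.sqrt_pos.mpr hκ)).trans_le (hπ hκ)

lemma sK_nonneg_of_mem_Icc (hθ : θ ∈ Set.Icc 0 D) : 0 ≤ sK κ θ :=
  sK_nonneg hθ.1 fun hκ => (mul_le_mul_of_nonneg_left hθ.2 (Real.sqrt_nonneg κ)).trans (hπ hκ)

lemma cK_pos_of_lt_half (hθ : θ ∈ Set.Ico 0 (D / 2)) : 0 < cK κ θ :=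
  cK_pos hθ.1 fun hκ => by
    have := mul_lt_mul_of_pos_left hθ.2 (Real.sqrt_pos.mpr hκ)
    linarith [hπ hκ]

lemma massRatio_pos (hN : 1 ≤ N) (ha : a ∈ Set.Ioo 0 D) : 0 < massRatio κ N D a := by
  have hs : ∀ θ ∈ Set.Ioo a D, 0 < sK κ θ := fun θ hθ =>
    sK_pos_of_mem_Ioo hπ ⟨ha.1.trans hθ.1, hθ.2⟩
  have hG : 0 < tailMass κ N D a := by
    simpa using tailMass_lt_tailMass (D := D) hN ha.2 hs
  exact div_pos hG (Real.rpow_pos_of_pos (sK_pos_of_mem_Ioo hπ ha) _)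

lemma strictAntiOn_massRatio_sub_add_massRatio (hN : 1 < N) :
    StrictAntiOn (fun x => massRatio κ N D (D - x) + massRatio κ N D x) (Set.Ioo 0 (D / 2)) := by
  set ct := fun θ => cK κ θ / sK κ θ ^ N
  set G := tailMass κ N D
  have hderiv : ∀ x ∈ Set.Ioo 0 (D / 2), HasDerivAt
      (fun x => massRatio κ N D (D - x) + massRatio κ N D x)
      ((N - 1) * (ct (D - x) * G (D - x) - ct x * G x)) x := by
    intro x hx
    obtain ⟨hx, hDx, -⟩ := mem_Ioo_of_mem_Ioo_half hx
    have hleft := (hasDerivAt_massRatio (D := D) hN.le (sK_pos_of_mem_Ioo hπ hDx)).comp x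
      ((hasDerivAt_id x).const_sub D)
    refine (hleft.add (hasDerivAt_massRatio hN.le (sK_pos_of_mem_Ioo hπ hx))).congr_deriv ?_
    ring
  refine strictAntiOn_of_deriv_neg (convex_Ioo 0 (D / 2))
    (fun x hx => (hderiv x hx).continuousAt.continuousWithinAt) fun x hx => ?_
  rw [interior_Ioo] at hx
  rw [(hderiv x hx).deriv]
  obtain ⟨hx', hDx, hlt⟩ := mem_Ioo_of_mem_Ioo_half hx
  have hs : ∀ θ ∈ Set.Ioo 0 D, 0 < sK κ θ := fun θ => sK_pos_of_mem_Ioo hπ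
  have hct : ct (D - x) < ct x := strictAntiOn_cK_div_sK_rpow hN.le hs hx' hDx hlt
  have hct_pos : 0 < ct x :=
    div_pos (cK_pos_of_lt_half hπ ⟨hx.1.le, hx.2⟩) (Real.rpow_pos_of_pos (hs x hx') N)
  have hG : G (D - x) < G x :=
    tailMass_lt_tailMass hN.le hlt fun θ hθ => hs θ ⟨hx.1.trans hθ.1, hθ.2.trans hDx.2⟩
  have hG_pos : 0 < G (D - x) := by
    simpa [G] using tailMass_lt_tailMass (D := D) hN.le hDx.2 fun θ hθ =>
      hs θ ⟨hDx.1.trans hθ.1, hθ.2⟩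
  have : ct (D - x) * G (D - x) < ct x * G x := by nlinarith
  exact mul_neg_of_pos_of_neg (sub_pos.mpr hN) (sub_neg.mpr this)

end DiameterBound

lemma fKND_eq_inv_massRatio_sub_add_massRatio {K N D x : ℝ}
    (hπ : 0 < K / (N - 1) → Real.sqrt (K / (N - 1)) * D ≤ Real.pi) (hx : x ∈ Set.Ioo 0 D) :
    fKND K N D x = (massRatio (K / (N - 1)) N D (D - x) + massRatio (K / (N - 1)) N D x)⁻¹ := by
  have hx0 : ¬(x = 0 ∨ x = D) := by
    rintro (rfl | rfl)
    exacts [lt_irrefl _ hx.1, lt_irrefl _ hx.2]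
  have hs : ∀ θ ∈ Set.Icc 0 D, 0 ≤ sK (K / (N - 1)) θ := fun θ => sK_nonneg_of_mem_Icc hπ
  have hreflect : ∫ y in (0:ℝ)..x, (sK (K / (N - 1)) (D - y) / sK (K / (N - 1)) (D - x)) ^ (N - 1)
      = massRatio (K / (N - 1)) N D (D - x) := by
    rw [intervalIntegral.integral_comp_sub_left
      (fun y => (sK (K / (N - 1)) y / sK (K / (N - 1)) (D - x)) ^ (N - 1)) D, sub_zero]
    exact integral_sK_div_rpow (by linarith [hx.1]) fun θ hθ =>
      hs θ ⟨by linarith [hθ.1, hx.2], hθ.2⟩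
  rw [fKND, if_neg hx0, hreflect,
    integral_sK_div_rpow hx.2.le fun θ hθ => hs θ ⟨hx.1.le.trans hθ.1, hθ.2⟩]

theorem fKND_strictMonoOn_general (K N D : ℝ) (hN : 1 < N)
    (hDK : 0 < K → D ≤ Real.pi * Real.sqrt ((N - 1) / K)) :
    StrictMonoOn (fKND K N D) (Set.Ioo 0 (D / 2)) := by
  have hπ := sqrt_div_mul_le_pi (sub_pos.mpr hN) hDK
  intro x hx y hy hxy
  obtain ⟨hx', -, -⟩ := mem_Ioo_of_mem_Ioo_half hx
  obtain ⟨hy', hDy, -⟩ := mem_Ioo_of_mem_Ioo_half hy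
  rw [fKND_eq_inv_massRatio_sub_add_massRatio hπ hx',
    fKND_eq_inv_massRatio_sub_add_massRatio hπ hy']
  refine inv_strictAnti₀ ?_ (strictAntiOn_massRatio_sub_add_massRatio hπ hN hx hy hxy)
  exact add_pos (massRatio_pos hπ hN.le hDy) (massRatio_pos hπ hN.le hy')

/-- Proposition (Lower bound), point (i): `f_{K,N,D}` is strictly increasing on `(0, D/2)`. -/
theorem fKND_strictMonoOn (K N D : ℝ) (hN : 1 < N) (hD : 0 < D)
    (hDK : 0 < K → D ≤ Real.pi * Real.sqrt ((N - 1) / K)) :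
    StrictMonoOn (fKND K N D) (Set.Ioo 0 (D / 2)) :=
  fKND_strictMonoOn_general K N D hN hDK

end
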